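/- arXiv:0902.3210 — 6 statements merged into one kernel-verified Lean document; each statement's English description precedes it below -/
import Mathlib

section
/- For nonnegative integers n, m, r with n ≥ r and any real x ≥ 0, the identity ∑_{k=0}^{n-r} (x/(x+1))^k · C(m+k-1, k) = (1+x)^m · I_{1/(x+1)}(m, n-r+1) holds, where I_t(a,b) is the regularized incomplete beta function. -/
open Finset

/-!
With `p = 1/(x+1)` and `q = x/(x+1)` we have `p + q = 1` and `(1+x)^m p^m = 1`, so with
`N = n - r` the claim is `∑_{k ≤ N} C(m+k-1,k) p^m q^k = I_p(m, N+1)`: the `m`-th success of a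
Bernoulli(`p`) sequence comes within the first `m+N` trials iff those trials contain at least `m` successes.
After reflecting the binomial sum this becomes
`∑_{k ≤ N} C(m+k-1,k) q^k = ∑_{i ≤ N} C(m+N,i) q^i p^(N-i)`, proved by induction on `N`:
Pascal's rule turns the right-hand side at `N+1` into `(p+q)` times its value at `N` plus the
new term `C(m+N,N+1) q^(N+1)`.
-/

/-- Regularized incomplete beta function for positive integer parameters,
via the binomial-sum formula `I_t(a,b) = ∑_{j=a}^{a+b-1} C(a+b-1,j) t^j (1-t)^{a+b-1-j}`. -/
noncomputable def regIncBetaSum (a b : ℕ) (t : ℝ) : ℝ :=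
  ∑ j ∈ Finset.Icc a (a + b - 1), (Nat.choose (a + b - 1) j : ℝ) * t ^ j * (1 - t) ^ (a + b - 1 - j)

section BinomialSums

variable {R : Type*} [CommSemiring R]

theorem sum_range_choose_succ_mul_pow_mul_pow (n N : ℕ) (p q : R) :
    ∑ i ∈ range (N + 2), ((n + 1).choose i : R) * q ^ i * p ^ (N + 1 - i)
      = (p + q) * ∑ i ∈ range (N + 1), (n.choose i : R) * q ^ i * p ^ (N - i)
        + n.choose (N + 1) * q ^ (N + 1) := by
  have pascal : ∑ i ∈ range (N + 2), ((n + 1).choose i : R) * q ^ i * p ^ (N + 1 - i)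
      = ∑ i ∈ range (N + 2), (n.choose i : R) * q ^ i * p ^ (N + 1 - i)
        + q * ∑ i ∈ range (N + 1), (n.choose i : R) * q ^ i * p ^ (N - i) := by
    rw [sum_range_succ' _ (N + 1), sum_range_succ' _ (N + 1), mul_sum]
    simp only [Nat.choose_succ_succ', Nat.cast_add, Nat.choose_zero_right, add_mul, sum_add_distrib,
      Nat.add_sub_add_right, pow_succ]
    rw [add_assoc, add_comm]
    congr 1
    exact sum_congr rfl fun i _ => by ring
  have drop_top : ∑ i ∈ range (N + 2), (n.choose i : R) * q ^ i * p ^ (N + 1 - i)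
      = p * ∑ i ∈ range (N + 1), (n.choose i : R) * q ^ i * p ^ (N - i)
        + n.choose (N + 1) * q ^ (N + 1) := by
    rw [sum_range_succ, Nat.sub_self, pow_zero, mul_one, mul_sum]
    congr 1
    refine sum_congr rfl fun i hi => ?_
    rw [Nat.sub_add_comm (mem_range_succ_iff.mp hi), pow_succ]
    ring
  rw [pascal, drop_top]
  ring

theorem sum_range_choose_add_sub_one_mul_pow {p q : R} (hpq : p + q = 1) (m N : ℕ) :
    ∑ k ∈ range (N + 1), q ^ k * ((m + k - 1).choose k : R)
      = ∑ i ∈ range (N + 1), ((m + N).choose i : R) * q ^ i * p ^ (N - i) := by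
  induction N with
  | zero => simp
  | succ N ih =>
    rw [sum_range_succ, ih, ← add_assoc m N 1, sum_range_choose_succ_mul_pow_mul_pow, hpq,
      one_mul, Nat.add_sub_cancel, mul_comm (q ^ _)]

end BinomialSums

theorem regIncBetaSum_succ_eq (a N : ℕ) {p q : ℝ} (hpq : p + q = 1) :
    regIncBetaSum a (N + 1) p
      = p ^ a * ∑ i ∈ range (N + 1), ((a + N).choose i : ℝ) * q ^ i * p ^ (N - i) := by
  rw [regIncBetaSum, show a + (N + 1) - 1 = a + N by omega, ← Ico_add_one_right_eq_Icc,
    sum_Ico_eq_sum_range, show a + N + 1 - a = N + 1 by omega, ← sum_range_reflect, mul_sum,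
    eq_sub_of_add_eq' hpq]
  refine sum_congr rfl fun i hi => ?_
  have hi : i ≤ N := mem_range_succ_iff.mp hi
  rw [show a + (N + 1 - 1 - i) = a + (N - i) by omega, show a + N - (a + (N - i)) = i by omega,
    Nat.choose_symm_of_eq_add (show a + N = a + (N - i) + i by omega), pow_add]
  ring

theorem sum_choose_eq_regIncBeta_general (n m r : ℕ) (x : ℝ) (hx : 0 ≤ x) :
    ∑ k ∈ Finset.range (n - r + 1), (x / (x + 1)) ^ k * (Nat.choose (m + k - 1) k : ℝ)
      = (1 + x) ^ m * regIncBetaSum m (n - r + 1) (1 / (x + 1)) := by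
  have hx1 : x + 1 ≠ 0 := by positivity
  have hpq : 1 / (x + 1) + x / (x + 1) = 1 := by field_simp; ring
  have hpow : (1 + x) ^ m * (1 / (x + 1)) ^ m = 1 := by
    rw [← mul_pow, add_comm 1 x, mul_one_div_cancel hx1, one_pow]
  rw [regIncBetaSum_succ_eq m (n - r) hpq, ← mul_assoc, hpow, one_mul,
    sum_range_choose_add_sub_one_mul_pow hpq]

/-- for nonnegative integers `n ≥ r`, `m`, and real `x ≥ 0`,
`∑_{k=0}^{n-r} (x/(x+1))^k C(m+k-1,k) = (1+x)^m ⬝ I_{1/(x+1)}(m, n-r+1)`. -/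
theorem sum_choose_eq_regIncBeta (n m r : ℕ) (hnr : r ≤ n) (x : ℝ) (hx : 0 ≤ x) :
    ∑ k ∈ Finset.range (n - r + 1), (x / (x + 1)) ^ k * (Nat.choose (m + k - 1) k : ℝ)
      = (1 + x) ^ m * regIncBetaSum m (n - r + 1) (1 / (x + 1)) :=
  sum_choose_eq_regIncBeta_general n m r x hx
end

section
/- For nonnegative integers n, r, m with n ≥ r and real x ≥ 0, ∑_{k=0}^{n-r} x^k (1+x)^{n-r-k} C(m+k-1, k) = ∑_{k=0}^{n-r} C(n-r+m, k) x^k. -/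
/-! Both sides satisfy `S (q + 1) = (1 + x) * S q + C(m + q, q + 1) * x ^ (q + 1)`: on the left by
peeling off the last summand, on the right (a truncated binomial sum) by Pascal's rule. -/

open Finset

theorem sum_range_succ_choose_succ_mul_pow {R : Type*} [CommSemiring R] (N q : ℕ) (x : R) :
    ∑ k ∈ range (q + 2), ((N + 1).choose k : R) * x ^ k
      = (1 + x) * ∑ k ∈ range (q + 1), (N.choose k : R) * x ^ k
        + (N.choose (q + 1) : R) * x ^ (q + 1) := by
  calc ∑ k ∈ range (q + 2), ((N + 1).choose k : R) * x ^ k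
      = x * ∑ k ∈ range (q + 1), (N.choose k : R) * x ^ k
          + (∑ k ∈ range (q + 1), (N.choose (k + 1) : R) * x ^ (k + 1) + 1) := by
        simp only [sum_range_succ' _ (q + 1), Nat.choose_succ_succ, Nat.cast_add, add_mul,
          sum_add_distrib, mul_sum, Nat.choose_zero_right, Nat.cast_one, pow_zero, mul_one,
          pow_succ, add_assoc]
        congr 1
        exact sum_congr rfl fun k _ => by ring
    _ = x * ∑ k ∈ range (q + 1), (N.choose k : R) * x ^ k
          + ∑ k ∈ range (q + 2), (N.choose k : R) * x ^ k := by
        rw [sum_range_succ' _ (q + 1)]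
        simp
    _ = _ := by
        rw [sum_range_succ _ (q + 1)]
        ring

theorem sum_pow_mul_one_add_pow_mul_choose {R : Type*} [CommSemiring R] (m q : ℕ) (x : R) :
    ∑ k ∈ range (q + 1), x ^ k * (1 + x) ^ (q - k) * ((m + k - 1).choose k : R)
      = ∑ k ∈ range (q + 1), ((q + m).choose k : R) * x ^ k := by
  induction q with
  | zero => simp
  | succ q ih =>
    have peel : ∀ k ∈ range (q + 1), x ^ k * (1 + x) ^ (q + 1 - k) * ((m + k - 1).choose k : R)
        = (1 + x) * (x ^ k * (1 + x) ^ (q - k) * ((m + k - 1).choose k : R)) := by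
      intro k hk
      rw [Nat.sub_add_comm (Nat.le_of_lt_succ (mem_range.1 hk)), pow_succ]
      ring
    rw [sum_range_succ, sum_congr rfl peel, ← mul_sum, ih, Nat.add_right_comm q 1 m,
      sum_range_succ_choose_succ_mul_pow, Nat.sub_self, ← add_assoc, Nat.add_sub_cancel,
      add_comm m q]
    ring

theorem sum_pow_mul_choose_eq_general (n r m : ℕ) (x : ℝ) :
    ∑ k ∈ Finset.range (n - r + 1),
        x ^ k * (1 + x) ^ (n - r - k) * (Nat.choose (m + k - 1) k : ℝ)
      = ∑ k ∈ Finset.range (n - r + 1), (Nat.choose (n - r + m) k : ℝ) * x ^ k :=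
  sum_pow_mul_one_add_pow_mul_choose m (n - r) x

/-- for nonnegative integers `n ≥ r`, `m`, and real `x ≥ 0`,
`∑_{k=0}^{n-r} x^k (1+x)^{n-r-k} C(m+k-1,k) = ∑_{k=0}^{n-r} C(n-r+m,k) x^k`. -/
theorem sum_pow_mul_choose_eq (n r m : ℕ) (hnr : r ≤ n) (x : ℝ) (hx : 0 ≤ x) :
    ∑ k ∈ Finset.range (n - r + 1),
        x ^ k * (1 + x) ^ (n - r - k) * (Nat.choose (m + k - 1) k : ℝ)
      = ∑ k ∈ Finset.range (n - r + 1), (Nat.choose (n - r + m) k : ℝ) * x ^ k :=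
  sum_pow_mul_choose_eq_general n r m x
end

section
/- For any integers T_f ≥ U_f ≥ 1, U_c ≥ 1, δ ∈ (0,1), and κ ≥ 0, the double sum ∑_{k=1}^{T_f−U_f} (1/k!) ∑_{j=1}^{k} C(k,j) (κ/(κ+1))^{k−j} [∏_{n=0}^{k−j−1}(U_c+n)] [∏_{m=0}^{j−1}(m−δ)] equals ∑_{j=0}^{T_f−U_f−1} (κ/(κ+1))^j C(U_c+j−1, j) ∑_{l=1}^{T_f−U_f−j} (1/l!) ∏_{m=0}^{l−1}(m−δ). -/
/-!
Write `a i = (κ/(κ+1))^i C(U_c+i-1, i)` and `b l = (1/l!) ∏_{m<l} (m-δ)`. Since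
`∏_{n<i} (U_c+n) = i! C(U_c+i-1, i)` and `C(k,j)/k! = 1/(j!(k-j)!)`, the inner sum on the left is
the convolution `∑_{j=1}^k a(k-j) b(j)`. Summing it over `1 ≤ k ≤ N` and exchanging the order of
summation over the triangle `0 ≤ k - j < k ≤ N` gives `∑_{i<N} a(i) ∑_{l=1}^{N-i} b(l)`.
-/

open Finset Nat

theorem Finset.sum_Icc_one_eq_sum_range_succ {M : Type*} [AddCommMonoid M] (f : ℕ → M) (n : ℕ) :
    ∑ k ∈ Icc 1 n, f k = ∑ k ∈ range n, f (k + 1) := by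
  rw [← Ico_add_one_right_eq_Icc, sum_Ico_eq_sum_range, add_tsub_cancel_right]
  simp only [add_comm]

theorem Finset.sum_Icc_sum_Icc_sub_mul {R : Type*} [NonUnitalNonAssocSemiring R] (a b : ℕ → R)
    (N : ℕ) :
    ∑ k ∈ Icc 1 N, ∑ j ∈ Icc 1 k, a (k - j) * b j
      = ∑ i ∈ range N, a i * ∑ l ∈ Icc 1 (N - i), b l := by
  simp only [sum_Icc_one_eq_sum_range_succ, mul_sum,
    ← sum_range_diag_flip N fun i l => a i * b (l + 1)]
  refine sum_congr rfl fun m _ => ?_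
  rw [← sum_range_reflect]
  refine sum_congr rfl fun j hj => ?_
  rw [mem_range] at hj
  congr 2
  omega

theorem Nat.cast_prod_range_add {R : Type*} [CommSemiring R] (u i : ℕ) :
    ∏ n ∈ range i, ((u : R) + n) = i ! * (u + i - 1).choose i := by
  have h := (ascFactorial_eq_prod_range u i).symm.trans (ascFactorial_eq_factorial_mul_choose' u i)
  simpa using congrArg (Nat.cast : ℕ → R) h

theorem Nat.one_div_factorial_mul_choose_mul_factorial {K : Type*} [Field K] [CharZero K]
    {j k : ℕ} (h : j ≤ k) : 1 / (k ! : K) * k.choose j * (k - j)! = 1 / j ! := by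
  have hk : (k ! : K) ≠ 0 := Nat.cast_ne_zero.2 (factorial_ne_zero k)
  have hkj : ((k - j)! : K) ≠ 0 := Nat.cast_ne_zero.2 (factorial_ne_zero _)
  rw [cast_choose K h]
  field_simp

theorem double_sum_rearrangement_general (Tf Uf Uc : ℕ) (δ : ℝ) (κ : ℝ) :
    ∑ k ∈ Finset.Icc 1 (Tf - Uf), (1 / (Nat.factorial k : ℝ)) *
        ∑ j ∈ Finset.Icc 1 k, (Nat.choose k j : ℝ) * (κ / (κ + 1)) ^ (k - j) *
          (∏ n ∈ Finset.range (k - j), ((Uc : ℝ) + n)) *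
          (∏ m ∈ Finset.range j, ((m : ℝ) - δ))
      = ∑ j ∈ Finset.range (Tf - Uf), (κ / (κ + 1)) ^ j * (Nat.choose (Uc + j - 1) j : ℝ) *
          ∑ l ∈ Finset.Icc 1 (Tf - Uf - j), (1 / (Nat.factorial l : ℝ)) *
            ∏ m ∈ Finset.range l, ((m : ℝ) - δ) := by
  rw [← sum_Icc_sum_Icc_sub_mul]
  refine sum_congr rfl fun k _ => ?_
  rw [mul_sum]
  refine sum_congr rfl fun j hj => ?_
  rw [Nat.cast_prod_range_add, ← one_div_factorial_mul_choose_mul_factorial (mem_Icc.1 hj).2]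
  ring

/-- for integers `T_f ≥ U_f ≥ 1`, `U_c ≥ 1`, `δ ∈ (0,1)`, `κ ≥ 0`,
`∑_{k=1}^{T_f−U_f} (1/k!) ∑_{j=1}^{k} C(k,j) (κ/(κ+1))^{k−j} [∏_{n=0}^{k−j−1}(U_c+n)]
   [∏_{m=0}^{j−1}(m−δ)]
 = ∑_{j=0}^{T_f−U_f−1} (κ/(κ+1))^j C(U_c+j−1, j) ∑_{l=1}^{T_f−U_f−j} (1/l!) ∏_{m=0}^{l−1}(m−δ)`. -/
theorem double_sum_rearrangement (Tf Uf Uc : ℕ) (hUf : 1 ≤ Uf) (hTfUf : Uf ≤ Tf)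
    (hUc : 1 ≤ Uc) (δ : ℝ) (hδ0 : 0 < δ) (hδ1 : δ < 1) (κ : ℝ) (hκ : 0 ≤ κ) :
    ∑ k ∈ Finset.Icc 1 (Tf - Uf), (1 / (Nat.factorial k : ℝ)) *
        ∑ j ∈ Finset.Icc 1 k, (Nat.choose k j : ℝ) * (κ / (κ + 1)) ^ (k - j) *
          (∏ n ∈ Finset.range (k - j), ((Uc : ℝ) + n)) *
          (∏ m ∈ Finset.range j, ((m : ℝ) - δ))
      = ∑ j ∈ Finset.range (Tf - Uf), (κ / (κ + 1)) ^ j * (Nat.choose (Uc + j - 1) j : ℝ) *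
          ∑ l ∈ Finset.Icc 1 (Tf - Uf - j), (1 / (Nat.factorial l : ℝ)) *
            ∏ m ∈ Finset.range l, ((m : ℝ) - δ) :=
  double_sum_rearrangement_general Tf Uf Uc δ κ
end

section
/- Fix target SIR Γ > 0, outage ε ∈ (0,1), path loss exponent α_c > 0, constant K > 0, powers P_c, P_f > 0, and integer T_f ≥ 1. Define D_{f,SU} = [ (K/Γ)(P_f/P_c) · ε^{1/T_f}/(1−ε^{1/T_f}) ]^{−1/α_c} and D_{f,MU} = [ (K/Γ)(P_f/(T_f P_c)) · ε/(1−ε) ]^{−1/α_c}. Then D_{f,SU}/D_{f,MU} = [ ((1−ε^{1/T_f})/ε^{1/T_f}) · (ε/(1−ε)) · (1/T_f) ]^{1/α_c}, and this ratio is strictly less than 1 for all T_f ≥ 2 and ε ∈ (0,1). -/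
/-! The ratio of the two radii is `(Y / X) ^ (1 / α_c)` for the two bases `X`, `Y`, and the common
factor `(K / Γ)(P_f / P_c)` cancels in `Y / X`. With `a = ε ^ (1 / T_f)` we have `ε ≤ a < 1`, and the
odds `t ↦ t / (1 - t)` are monotone on `[0, 1)`, so `((1 - a) / a) (ε / (1 - ε)) ≤ 1`; the factor
`1 / T_f ≤ 1 / 2` then makes the base, and hence the ratio, strictly less than `1`. -/

open Real

theorem rpow_neg_div_rpow_neg {x y : ℝ} (hx : 0 ≤ x) (hy : 0 ≤ y) (s : ℝ) :
    x ^ (-s) / y ^ (-s) = (y / x) ^ s := by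
  rw [rpow_neg hx, rpow_neg hy, div_rpow hy hx, inv_div_inv]

theorem div_one_sub_le_div_one_sub {a b : ℝ} (hb : b ≤ a) (ha : a < 1) :
    b / (1 - b) ≤ a / (1 - a) := by
  rw [div_le_div_iff₀ (by linarith) (by linarith)]
  nlinarith

theorem one_sub_div_mul_div_one_sub_mul_one_div_lt_one {a ε T : ℝ} (hε : 0 < ε) (hεa : ε ≤ a)
    (ha : a < 1) (hT : 2 ≤ T) :
    (1 - a) / a * (ε / (1 - ε)) * (1 / T) < 1 := by
  have ha0 : 0 < a := hε.trans_le hεa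
  have hodds : (1 - a) / a * (ε / (1 - ε)) ≤ 1 := by
    calc (1 - a) / a * (ε / (1 - ε)) ≤ (1 - a) / a * (a / (1 - a)) :=
          mul_le_mul_of_nonneg_left (div_one_sub_le_div_one_sub hεa ha)
            (div_nonneg (by linarith) ha0.le)
      _ = 1 := by field_simp [(by linarith : (1 - a) ≠ 0)]
  calc (1 - a) / a * (ε / (1 - ε)) * (1 / T) ≤ 1 * (1 / T) := by gcongr
    _ < 1 := by rw [one_mul, div_lt_one (by linarith)]; linarith

/-- with
`D_{f,SU} = [(K/Γ)(P_f/P_c) ε^{1/T_f}/(1−ε^{1/T_f})]^{−1/α_c}` and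
`D_{f,MU} = [(K/Γ)(P_f/(T_f P_c)) ε/(1−ε)]^{−1/α_c}`, the ratio satisfies
`D_{f,SU}/D_{f,MU} = [((1−ε^{1/T_f})/ε^{1/T_f}) (ε/(1−ε)) (1/T_f)]^{1/α_c}`,
and this ratio is `< 1` whenever `T_f ≥ 2`. -/
theorem no_coverage_radius_ratio (Γ₀ ε αc K Pc Pf : ℝ) (Tf : ℕ)
    (hΓ : 0 < Γ₀) (hε0 : 0 < ε) (hε1 : ε < 1) (hαc : 0 < αc) (hK : 0 < K)
    (hPc : 0 < Pc) (hPf : 0 < Pf) (hTf : 1 ≤ Tf) :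
    let DfSU : ℝ := ((K / Γ₀) * (Pf / Pc) * (ε ^ (1 / (Tf : ℝ)) / (1 - ε ^ (1 / (Tf : ℝ))))) ^ (-(1 / αc))
    let DfMU : ℝ := ((K / Γ₀) * (Pf / ((Tf : ℝ) * Pc)) * (ε / (1 - ε))) ^ (-(1 / αc))
    DfSU / DfMU
        = (((1 - ε ^ (1 / (Tf : ℝ))) / ε ^ (1 / (Tf : ℝ))) * (ε / (1 - ε)) * (1 / (Tf : ℝ)))
            ^ (1 / αc) ∧
      (2 ≤ Tf → DfSU / DfMU < 1) := by
  have hT : (1 : ℝ) ≤ Tf := by exact_mod_cast hTf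
  set a := ε ^ (1 / (Tf : ℝ))
  intro DfSU DfMU
  have ha0 : 0 < a := rpow_pos_of_pos hε0 _
  have ha1 : a < 1 := rpow_lt_one hε0.le hε1 (by positivity)
  have hεa : ε ≤ a := self_le_rpow_of_le_one hε0.le hε1.le (div_le_one_of_le₀ hT (by linarith))
  have h1a : 0 < 1 - a := by linarith
  have h1ε : 0 < 1 - ε := by linarith
  have hratio : DfSU / DfMU = ((1 - a) / a * (ε / (1 - ε)) * (1 / (Tf : ℝ))) ^ (1 / αc) := by
    rw [rpow_neg_div_rpow_neg (by positivity) (by positivity)]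
    congr 1
    field_simp
  refine ⟨hratio, fun h2 => hratio ▸ rpow_lt_one (by positivity) ?_ (by positivity)⟩
  exact one_sub_div_mul_div_one_sub_mul_one_div_lt_one hε0 hεa ha1 (by exact_mod_cast h2)
end

section
/- Let Π be a homogeneous Poisson point process on ℝ² with intensity λ, and attach to each point X_j an i.i.d. mark S_j ~ Gamma(U, 1) (U a positive integer), independent of Π. For α > 2 let δ = 2/α ∈ (0,1). Then the Laplace transform of I = ∑_j (S_j/U) |X_j|^{−α} satisfies E[e^{−θI}] = exp(−λ C θ^δ) for θ > 0, where C = π δ U^{−δ} ∑_{k=0}^{U−1} C(U,k) B(k+δ, U−k−δ) and B is the Beta function. -/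
open MeasureTheory ProbabilityTheory Finset

noncomputable def betaFn (a b : ℝ) : ℝ := Real.Gamma a * Real.Gamma b / Real.Gamma (a + b)

/-! Given the Laplace functional, only the Gamma mark and the geometry of the plane remain. The
mark contributes `E[e^{-tS}] = (1 + t)^{-U}`. In polar coordinates, the substitution
`v = (θ/U) r^{-α}` turns the exponent into `(2π/α) (θ/U)^δ ∫_0^∞ v^{-δ-1} (1 - (1 + v)^{-U}) dv`.
Expanding `(1 + v)^U - 1` by the binomial theorem splits this integral into Beta integrals of
the second kind, `∫_0^∞ v^{a-1} (1 + v)^{-(a+b)} dv = B(a, b)`; the substitution `t = v/(1 + v)`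
carries these to the usual Beta integrals over `(0, 1)`. -/

open Real Set

theorem integral_exp_neg_mul_gammaMeasure {a r t : ℝ} (ha : 0 < a) (hr : 0 < r)
    (ht : -r < t) :
    ∫ s, exp (-(t * s)) ∂gammaMeasure a r = (r / (r + t)) ^ a := by
  have hrt : 0 < r + t := by linarith
  have hdensity : ∀ s, (gammaPDF a r s).toReal • exp (-(t * s)) = (Set.Ici 0).indicator
      (fun s => r ^ a / Gamma a * (s ^ (a - 1) * exp (-((r + t) * s)))) s := by
    intro s
    rw [gammaPDF, ENNReal.toReal_ofReal (gammaPDFReal_nonneg ha hr s), gammaPDFReal]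
    split_ifs with hs
    · rw [indicator_of_mem (Set.mem_Ici.mpr hs), smul_eq_mul, mul_assoc, mul_assoc, ← exp_add]
      ring_nf
    · simp [indicator_of_notMem (Set.notMem_Ici.mpr (not_le.mp hs))]
  rw [gammaMeasure, integral_withDensity_eq_integral_toReal_smul (f := gammaPDF a r)
      (measurable_gammaPDFReal a r).ennreal_ofReal
      (ae_of_all _ fun _ => ENNReal.ofReal_lt_top), integral_congr_ae (ae_of_all _ hdensity),
    integral_indicator measurableSet_Ici, integral_Ici_eq_integral_Ioi, integral_const_mul,
    integral_rpow_mul_exp_neg_mul_Ioi ha hrt, div_rpow hr.le hrt.le, one_div, inv_rpow hrt.le]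
  field_simp [(Gamma_pos_of_pos ha).ne']

theorem betaFn_symm (a b : ℝ) : betaFn a b = betaFn b a := by
  rw [betaFn, betaFn, add_comm, mul_comm]

theorem ofReal_rpow_mul_one_sub_rpow {a b x : ℝ} (hx : x ∈ Set.Icc (0 : ℝ) 1) :
    ((x ^ (a - 1) * (1 - x) ^ (b - 1) : ℝ) : ℂ) =
      (x : ℂ) ^ ((a : ℂ) - 1) * (1 - (x : ℂ)) ^ ((b : ℂ) - 1) := by
  rw [Complex.ofReal_mul, Complex.ofReal_cpow hx.1, Complex.ofReal_cpow (sub_nonneg.mpr hx.2)]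
  push_cast
  rfl

theorem integrableOn_rpow_mul_one_sub_rpow_Ioo {a b : ℝ} (ha : 0 < a) (hb : 0 < b) :
    IntegrableOn (fun x : ℝ => x ^ (a - 1) * (1 - x) ^ (b - 1)) (Set.Ioo 0 1) := by
  have h := (Complex.betaIntegral_convergent (u := a) (v := b) (by simpa) (by simpa))
  rw [intervalIntegrable_iff_integrableOn_Ioc_of_le zero_le_one] at h
  refine IntegrableOn.congr_fun (h.mono_set Ioo_subset_Ioc_self).re (fun x hx => ?_)
    measurableSet_Ioo
  rw [← ofReal_rpow_mul_one_sub_rpow (Ioo_subset_Icc_self hx), RCLike.re_to_complex,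
    Complex.ofReal_re]

theorem integral_rpow_mul_one_sub_rpow_Ioo {a b : ℝ} (ha : 0 < a) (hb : 0 < b) :
    ∫ x in Set.Ioo 0 1, x ^ (a - 1) * (1 - x) ^ (b - 1) = betaFn a b := by
  have h : ((∫ x in Set.Ioo 0 1, x ^ (a - 1) * (1 - x) ^ (b - 1) : ℝ) : ℂ) =
      Complex.betaIntegral a b := by
    rw [Complex.betaIntegral, intervalIntegral.integral_of_le zero_le_one,
      ← integral_Ioc_eq_integral_Ioo, ← integral_complex_ofReal]
    exact setIntegral_congr_fun measurableSet_Ioc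
      fun x hx => ofReal_rpow_mul_one_sub_rpow (Ioc_subset_Icc_self hx)
  rw [← Complex.ofReal_inj, h, Complex.betaIntegral_eq_Gamma_mul_div _ _ (by simpa) (by simpa),
    betaFn, ← Complex.ofReal_add, Complex.Gamma_ofReal, Complex.Gamma_ofReal, Complex.Gamma_ofReal]
  push_cast
  rfl

theorem hasDerivAt_div_one_add {x : ℝ} (hx : x ≠ -1) :
    HasDerivAt (fun y : ℝ => y / (1 + y)) ((1 + x) ^ 2)⁻¹ x := by
  have h1x : 1 + x ≠ 0 := fun h => hx (by linarith)
  have h := (hasDerivAt_id' x).div ((hasDerivAt_id' x).const_add 1) h1x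
  rwa [show (1 * (1 + x) - x * 1) / (1 + x) ^ 2 = ((1 + x) ^ 2)⁻¹ by ring] at h

theorem injOn_div_one_add_Ioi : InjOn (fun y : ℝ => y / (1 + y)) (Set.Ioi 0) := by
  intro x (hx : 0 < x) y (hy : 0 < y) h
  field_simp at h
  linarith

theorem image_div_one_add_Ioi : (fun y : ℝ => y / (1 + y)) '' Set.Ioi 0 = Set.Ioo 0 1 := by
  ext t
  constructor
  · rintro ⟨x, hx : 0 < x, rfl⟩
    exact ⟨by positivity, (div_lt_one (by positivity)).mpr (by linarith)⟩
  · rintro ⟨ht0, ht1⟩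
    refine ⟨t / (1 - t), div_pos ht0 (by linarith), ?_⟩
    have : 1 - t ≠ 0 := by linarith
    field_simp
    ring

theorem abs_deriv_smul_rpow_mul_one_sub_rpow_div_one_add {a b x : ℝ} (hx : 0 < x) :
    |((1 + x) ^ 2)⁻¹| • ((x / (1 + x)) ^ (a - 1) * (1 - x / (1 + x)) ^ (b - 1)) =
      x ^ (a - 1) * (1 + x) ^ (-(a + b)) := by
  have h1x : 0 < 1 + x := by linarith
  have hsub : 1 - x / (1 + x) = (1 + x)⁻¹ := by field_simp; ring
  have hexp : (1 + x) ^ (-(a + b)) =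
      ((1 + x) ^ (a - 1))⁻¹ * ((1 + x) ^ (b - 1))⁻¹ * ((1 + x) ^ 2)⁻¹ := by
    rw [← rpow_natCast, ← rpow_neg h1x.le, ← rpow_neg h1x.le, ← rpow_neg h1x.le,
      ← rpow_add h1x, ← rpow_add h1x]
    congr 1
    push_cast
    ring
  rw [smul_eq_mul, abs_of_pos (by positivity), hsub, div_rpow hx.le h1x.le, inv_rpow h1x.le, hexp]
  ring

theorem integrableOn_rpow_mul_one_add_rpow_Ioi {a b : ℝ} (ha : 0 < a) (hb : 0 < b) :
    IntegrableOn (fun x : ℝ => x ^ (a - 1) * (1 + x) ^ (-(a + b))) (Set.Ioi 0) := by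
  have h := integrableOn_rpow_mul_one_sub_rpow_Ioo ha hb
  rw [← image_div_one_add_Ioi,
    integrableOn_image_iff_integrableOn_abs_deriv_smul measurableSet_Ioi
      (fun x (hx : 0 < x) => (hasDerivAt_div_one_add (by linarith)).hasDerivWithinAt)
      injOn_div_one_add_Ioi] at h
  exact h.congr_fun (fun x hx => abs_deriv_smul_rpow_mul_one_sub_rpow_div_one_add hx)
    measurableSet_Ioi

theorem integral_rpow_mul_one_add_rpow_Ioi {a b : ℝ} (ha : 0 < a) (hb : 0 < b) :
    ∫ x in Set.Ioi 0, x ^ (a - 1) * (1 + x) ^ (-(a + b)) = betaFn a b := by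
  rw [← integral_rpow_mul_one_sub_rpow_Ioo ha hb, ← image_div_one_add_Ioi,
    integral_image_eq_integral_abs_deriv_smul measurableSet_Ioi
      (fun x (hx : 0 < x) => (hasDerivAt_div_one_add (by linarith)).hasDerivWithinAt)
      injOn_div_one_add_Ioi]
  exact setIntegral_congr_fun measurableSet_Ioi
    fun x hx => (abs_deriv_smul_rpow_mul_one_sub_rpow_div_one_add hx).symm

theorem one_sub_one_add_rpow_neg_natCast {v : ℝ} (hv : 1 + v ≠ 0) (n : ℕ) :
    1 - (1 + v) ^ (-(n : ℝ)) =
      ∑ k ∈ range n, (n.choose k : ℝ) * v ^ (n - k) * (1 + v) ^ (-(n : ℝ)) := by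
  have hbinom : (1 + v) ^ n = ∑ k ∈ range n, (n.choose k : ℝ) * v ^ (n - k) + 1 := by
    rw [add_pow, sum_range_succ]
    simp only [one_pow, one_mul, Nat.sub_self, pow_zero, Nat.choose_self, Nat.cast_one, mul_one]
    exact congrArg (· + 1) (sum_congr rfl fun k _ => mul_comm _ _)
  rw [← sum_mul, rpow_neg_natCast, zpow_neg, zpow_natCast, eq_sub_of_add_eq hbinom.symm, sub_mul,
    mul_inv_cancel₀ (pow_ne_zero n hv), one_mul]

theorem integral_rpow_mul_one_sub_one_add_rpow_neg_natCast {δ : ℝ} (hδ0 : 0 < δ) (hδ1 : δ < 1)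
    (n : ℕ) :
    ∫ v in Set.Ioi 0, v ^ (-δ - 1) * (1 - (1 + v) ^ (-(n : ℝ))) =
      ∑ k ∈ range n, (n.choose k : ℝ) * betaFn (k + δ) (n - k - δ) := by
  have hpos : ∀ k ∈ range n, (0 : ℝ) < n - k - δ := fun k hk => by
    have : (k : ℝ) + 1 ≤ n := by exact_mod_cast mem_range.mp hk
    linarith
  have hexpand : ∀ v ∈ Set.Ioi (0 : ℝ), v ^ (-δ - 1) * (1 - (1 + v) ^ (-(n : ℝ))) =
      ∑ k ∈ range n, (n.choose k : ℝ) *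
        (v ^ ((n - k - δ) - 1) * (1 + v) ^ (-((n - k - δ) + (k + δ)))) := by
    intro v (hv : 0 < v)
    rw [one_sub_one_add_rpow_neg_natCast (by linarith) n, mul_sum]
    refine sum_congr rfl fun k hk => ?_
    rw [← rpow_natCast, Nat.cast_sub (mem_range.mp hk).le,
      show -((n - k - δ) + (k + δ)) = -(n : ℝ) by ring,
      show (n : ℝ) - k - δ - 1 = -δ - 1 + (n - k) by ring, rpow_add hv]
    ring
  rw [setIntegral_congr_fun measurableSet_Ioi hexpand, integral_finsetSum _ fun k hk =>
    (integrableOn_rpow_mul_one_add_rpow_Ioi (hpos k hk) (by positivity)).const_mul _]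
  refine sum_congr rfl fun k hk => ?_
  rw [integral_const_mul, integral_rpow_mul_one_add_rpow_Ioi (hpos k hk) (by positivity),
    betaFn_symm]

section Radial

variable {E : Type*} [NormedAddCommGroup E] [NormedSpace ℝ E]

theorem integral_fun_norm_euclideanSpace_fin_two (f : ℝ → E) :
    ∫ x : EuclideanSpace ℝ (Fin 2), f ‖x‖ = (2 * π) • ∫ y in Set.Ioi 0, y • f y := by
  rw [integral_fun_norm_addHaar, finrank_euclideanSpace_fin, measureReal_def,
    EuclideanSpace.volume_ball_fin_two]
  simp [ENNReal.toReal_ofReal pi_pos.le, ← smul_assoc]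

theorem integral_rpow_smul_comp_mul_Ioi (f : ℝ → E) (s : ℝ) {c : ℝ} (hc : 0 < c) :
    ∫ u in Set.Ioi 0, u ^ s • f (c * u) = c ^ (-s - 1) • ∫ v in Set.Ioi 0, v ^ s • f v := by
  have h := integral_comp_mul_left_Ioi (fun v => v ^ s • f v) 0 hc
  rw [mul_zero] at h
  rw [rpow_sub hc, rpow_one, div_eq_mul_inv, mul_smul, ← h, ← integral_smul]
  refine setIntegral_congr_fun measurableSet_Ioi fun u (hu : 0 < u) => ?_
  rw [smul_smul, mul_rpow hc.le hu.le, ← mul_assoc, ← rpow_add hc, neg_add_cancel, rpow_zero,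
    one_mul]

theorem integral_smul_comp_rpow_neg_Ioi (g : ℝ → E) {α : ℝ} (hα : 0 < α) :
    ∫ y in Set.Ioi 0, y • g (y ^ (-α)) =
      α⁻¹ • ∫ u in Set.Ioi 0, u ^ (-(2 / α) - 1) • g u := by
  rw [← integral_smul, ← integral_comp_rpow_Ioi (fun u => α⁻¹ • u ^ (-(2 / α) - 1) • g u)
    (neg_ne_zero.mpr hα.ne')]
  refine setIntegral_congr_fun measurableSet_Ioi fun y (hy : 0 < y) => ?_
  rw [smul_smul, smul_smul, ← rpow_mul hy.le, abs_neg, abs_of_pos hα]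
  congr 1
  have hpow : y ^ (-α - 1) * y ^ (2 + α) = y := by
    rw [← rpow_add hy, show -α - 1 + (2 + α) = 1 by ring, rpow_one]
  rw [show -α * (-(2 / α) - 1) = 2 + α by field_simp; ring]
  field_simp
  exact hpow.symm

theorem integral_comp_mul_norm_rpow_neg_euclideanSpace_fin_two (f : ℝ → E) {α c : ℝ}
    (hα : 0 < α) (hc : 0 < c) :
    ∫ x : EuclideanSpace ℝ (Fin 2), f (c * ‖x‖ ^ (-α)) =
      (2 * π * c ^ (2 / α) / α) • ∫ v in Set.Ioi 0, v ^ (-(2 / α) - 1) • f v := by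
  rw [integral_fun_norm_euclideanSpace_fin_two (fun r => f (c * r ^ (-α))),
    integral_smul_comp_rpow_neg_Ioi (fun u => f (c * u)) hα,
    integral_rpow_smul_comp_mul_Ioi f _ hc, smul_smul, smul_smul,
    show -(-(2 / α) - 1) - 1 = 2 / α by ring]
  congr 1
  ring

end Radial

theorem ppp_shot_noise_laplace_general (U : ℕ) (hU : 1 ≤ U) (α lam : ℝ) (hα : 2 < α)
    (L : ℝ → ℝ)
    (hL : ∀ θ : ℝ, 0 < θ → L θ = Real.exp (-lam *
      ∫ x : EuclideanSpace ℝ (Fin 2),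
        (1 - ∫ s : ℝ, Real.exp (-θ * (s / U) * ‖x‖ ^ (-α)) ∂(gammaMeasure U 1)))) :
    ∀ θ : ℝ, 0 < θ → L θ = Real.exp (-lam *
      (Real.pi * (2 / α) * ((U : ℝ) ^ (-(2 / α))) *
        ∑ k ∈ Finset.range U, (Nat.choose U k : ℝ) *
          betaFn ((k : ℝ) + 2 / α) ((U : ℝ) - k - 2 / α)) * θ ^ (2 / α)) := by
  intro θ hθ
  have hU0 : (0 : ℝ) < U := by exact_mod_cast hU
  have hα0 : 0 < α := by linarith
  have hc : 0 < θ / U := div_pos hθ hU0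
  have hmark_laplace : ∀ x : EuclideanSpace ℝ (Fin 2),
      1 - ∫ s, exp (-θ * (s / U) * ‖x‖ ^ (-α)) ∂gammaMeasure U 1 =
        1 - (1 + θ / U * ‖x‖ ^ (-α)) ^ (-(U : ℝ)) := by
    intro x
    have ht : 0 < 1 + θ / U * ‖x‖ ^ (-α) := by positivity
    simp_rw [show ∀ s, -θ * (s / U) * ‖x‖ ^ (-α) = -(θ / U * ‖x‖ ^ (-α) * s) by intro s; ring]
    rw [integral_exp_neg_mul_gammaMeasure hU0 one_pos (by linarith), rpow_neg ht.le, one_div,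
      inv_rpow ht.le]
  have hradial := integral_comp_mul_norm_rpow_neg_euclideanSpace_fin_two
    (fun v => 1 - (1 + v) ^ (-(U : ℝ))) hα0 hc
  simp only [smul_eq_mul] at hradial
  rw [hL θ hθ, integral_congr_ae (ae_of_all _ hmark_laplace), hradial,
    integral_rpow_mul_one_sub_one_add_rpow_neg_natCast (by positivity)
      ((div_lt_one hα0).mpr hα) U,
    div_rpow hθ.le hU0.le, rpow_neg hU0.le]
  congr 1
  ring

/-- for a homogeneous Poisson point process on `ℝ²` of intensity
`λ` with i.i.d. `Gamma(U,1)` marks, the Laplace transform of the shot noise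
`I = ∑_j (S_j/U)|X_j|^{−α}` satisfies `E[e^{−θI}] = exp(−λ C θ^δ)` with
`δ = 2/α` and `C = π δ U^{−δ} ∑_{k=0}^{U−1} C(U,k) B(k+δ, U−k−δ)`.  The Poisson
Laplace-functional (Campbell) formula
`E[e^{−θI}] = exp(−λ ∫_{ℝ²} (1 − E_S[e^{−θ(S/U)|x|^{−α}}]) dx)` is assumed as a
hypothesis (`hL`). -/
theorem ppp_shot_noise_laplace (U : ℕ) (hU : 1 ≤ U) (α lam : ℝ) (hα : 2 < α)
    (hlam : 0 < lam) (L : ℝ → ℝ)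
    (hL : ∀ θ : ℝ, 0 < θ → L θ = Real.exp (-lam *
      ∫ x : EuclideanSpace ℝ (Fin 2),
        (1 - ∫ s : ℝ, Real.exp (-θ * (s / U) * ‖x‖ ^ (-α)) ∂(gammaMeasure U 1)))) :
    ∀ θ : ℝ, 0 < θ → L θ = Real.exp (-lam *
      (Real.pi * (2 / α) * ((U : ℝ) ^ (-(2 / α))) *
        ∑ k ∈ Finset.range U, (Nat.choose U k : ℝ) *
          betaFn ((k : ℝ) + 2 / α) ((U : ℝ) - k - 2 / α)) * θ ^ (2 / α)) :=
  ppp_shot_noise_laplace_general U hU α lam hα L hL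
end

section
/- Let D_c(T_c) denote the cellular coverage radius D_c = (c₁/U_c)^{1/α_c} · (ε K_c /(λ_f C_f))^{1/(δ_f α_c)} where K_c satisfies (T_c−U_c+1)^{δ_f} ≤ K_c ≤ Γ(1−δ_f)(T_c−U_c+1)^{δ_f}. Then with single-user transmission (U_c = 1), D_c = Θ(T_c^{1/α_c}) as T_c → ∞, and with full multiuser transmission (U_c = T_c, hence K_c = 1), D_c = Θ(T_c^{−1/α_c}); hence the ratio D_{c,SU}/D_{c,MU} = Θ(T_c^{2/α_c}). -/
/-!
Put `q = 1/α_c` and `p = 1/(δ_f α_c)`, so that `δ_f p = q`. Then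
`D_c(T, U) = A · U^{-q} · K_c(T, U)^p` with `A = c₁^q (ε/(λ_f C_f))^p`. For `U = 1` the bounds on
`K_c` give `K_c ≍ T^{δ_f}`, hence `D_c ≍ T^q`; for `U = T` we have `K_c = 1` and `D_c = A T^{-q}`
exactly; the ratio is therefore `K_c(T, 1)^p · T^q ≍ T^{2q}`.
-/

open Real

/-- The paper's `Θ`, with constants valid for every `n ≥ 1`. -/
def IsThetaGeOne (f g : ℕ → ℝ) : Prop :=
  ∃ k₁ k₂ : ℝ, 0 < k₁ ∧ 0 < k₂ ∧ ∀ n : ℕ, 1 ≤ n → k₁ * g n ≤ f n ∧ f n ≤ k₂ * g n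

namespace IsThetaGeOne

variable {f f' g g' h : ℕ → ℝ}

lemma refl (g : ℕ → ℝ) : IsThetaGeOne g g :=
  ⟨1, 1, one_pos, one_pos, fun n _ => by simp⟩

lemma congr (hfg : IsThetaGeOne f g) (hf : ∀ n, 1 ≤ n → f n = f' n)
    (hg : ∀ n, 1 ≤ n → g n = g' n) : IsThetaGeOne f' g' := by
  obtain ⟨k₁, k₂, hk₁, hk₂, hb⟩ := hfg
  exact ⟨k₁, k₂, hk₁, hk₂, fun n hn => by rw [← hf n hn, ← hg n hn]; exact hb n hn⟩

lemma const_mul (hfg : IsThetaGeOne f g) {c : ℝ} (hc : 0 < c) :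
    IsThetaGeOne (fun n => c * f n) g := by
  obtain ⟨k₁, k₂, hk₁, hk₂, hb⟩ := hfg
  refine ⟨c * k₁, c * k₂, by positivity, by positivity, fun n hn => ?_⟩
  simp only [mul_assoc]
  exact ⟨mul_le_mul_of_nonneg_left (hb n hn).1 hc.le,
    mul_le_mul_of_nonneg_left (hb n hn).2 hc.le⟩

lemma mul_right (hfg : IsThetaGeOne f g) (hh : ∀ n, 0 ≤ h n) :
    IsThetaGeOne (fun n => f n * h n) (fun n => g n * h n) := by
  obtain ⟨k₁, k₂, hk₁, hk₂, hb⟩ := hfg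
  refine ⟨k₁, k₂, hk₁, hk₂, fun n hn => ?_⟩
  simp only [← mul_assoc]
  exact ⟨mul_le_mul_of_nonneg_right (hb n hn).1 (hh n),
    mul_le_mul_of_nonneg_right (hb n hn).2 (hh n)⟩

lemma rpow (hfg : IsThetaGeOne f g) (hg : ∀ n, 0 ≤ g n) {p : ℝ} (hp : 0 ≤ p) :
    IsThetaGeOne (fun n => f n ^ p) (fun n => g n ^ p) := by
  obtain ⟨k₁, k₂, hk₁, hk₂, hb⟩ := hfg
  refine ⟨k₁ ^ p, k₂ ^ p, by positivity, by positivity, fun n hn => ?_⟩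
  have hlo : 0 ≤ k₁ * g n := mul_nonneg hk₁.le (hg n)
  rw [← mul_rpow hk₁.le (hg n), ← mul_rpow hk₂.le (hg n)]
  exact ⟨rpow_le_rpow hlo (hb n hn).1 hp, rpow_le_rpow (hlo.trans (hb n hn).1) (hb n hn).2 hp⟩

end IsThetaGeOne

lemma div_rpow_mul_mul_rpow_eq {c x U K p q : ℝ} (hc : 0 ≤ c) (hx : 0 ≤ x) (hU : 0 ≤ U)
    (hK : 0 ≤ K) : (c / U) ^ q * (x * K) ^ p = c ^ q * x ^ p * (U ^ (-q) * K ^ p) := by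
  rw [div_rpow hc hU, mul_rpow hx hK, rpow_neg hU]
  ring

lemma mul_div_mul_rpow_neg {A k T q : ℝ} (hA : A ≠ 0) (hT : 0 < T) :
    A * k / (A * T ^ (-q)) = k * T ^ q := by
  rw [rpow_neg hT.le]
  field_simp

/-- with cellular coverage radius
`D_c(T_c, U_c) = (c₁/U_c)^{1/α_c} (ε K_c/(λ_f C_f))^{1/(δ_f α_c)}`, where
`(T_c−U_c+1)^{δ_f} ≤ K_c(T_c,U_c) ≤ Γ(1−δ_f)(T_c−U_c+1)^{δ_f}` and
`K_c(T_c,T_c) = 1`: single-user transmission (`U_c = 1`) gives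
`D_c = Θ(T_c^{1/α_c})`, full multiuser transmission (`U_c = T_c`) gives
`D_c = Θ(T_c^{−1/α_c})`, and the ratio is `Θ(T_c^{2/α_c})`. -/
theorem coverage_radius_scaling (αc δf c₁ ε lamf Cf : ℝ)
    (hαc : 0 < αc) (hδ0 : 0 < δf) (hδ1 : δf < 1)
    (hc₁ : 0 < c₁) (hε : 0 < ε) (hlamf : 0 < lamf) (hCf : 0 < Cf)
    (Kc : ℕ → ℕ → ℝ)
    (hKc : ∀ Tc Uc : ℕ, 1 ≤ Uc → Uc ≤ Tc →
      ((Tc - Uc + 1 : ℕ) : ℝ) ^ δf ≤ Kc Tc Uc ∧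
      Kc Tc Uc ≤ Real.Gamma (1 - δf) * ((Tc - Uc + 1 : ℕ) : ℝ) ^ δf)
    (hKcMU : ∀ Tc : ℕ, 1 ≤ Tc → Kc Tc Tc = 1) :
    let Dc : ℕ → ℕ → ℝ := fun Tc Uc =>
      (c₁ / Uc) ^ (1 / αc) * (ε * Kc Tc Uc / (lamf * Cf)) ^ (1 / (δf * αc))
    (∃ k₁ k₂ : ℝ, 0 < k₁ ∧ 0 < k₂ ∧ ∀ Tc : ℕ, 1 ≤ Tc →
        k₁ * (Tc : ℝ) ^ (1 / αc) ≤ Dc Tc 1 ∧ Dc Tc 1 ≤ k₂ * (Tc : ℝ) ^ (1 / αc)) ∧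
    (∃ k₃ k₄ : ℝ, 0 < k₃ ∧ 0 < k₄ ∧ ∀ Tc : ℕ, 1 ≤ Tc →
        k₃ * (Tc : ℝ) ^ (-(1 / αc)) ≤ Dc Tc Tc ∧ Dc Tc Tc ≤ k₄ * (Tc : ℝ) ^ (-(1 / αc))) ∧
    (∃ k₅ k₆ : ℝ, 0 < k₅ ∧ 0 < k₆ ∧ ∀ Tc : ℕ, 1 ≤ Tc →
        k₅ * (Tc : ℝ) ^ (2 / αc) ≤ Dc Tc 1 / Dc Tc Tc ∧
        Dc Tc 1 / Dc Tc Tc ≤ k₆ * (Tc : ℝ) ^ (2 / αc)) := by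
  intro Dc
  set q := 1 / αc
  set p := 1 / (δf * αc)
  set A := c₁ ^ q * (ε / (lamf * Cf)) ^ p
  have hA : 0 < A := by positivity
  have hΓ : 0 < Gamma (1 - δf) := Gamma_pos_of_pos (by linarith)
  have hD : ∀ Tc Uc : ℕ, 1 ≤ Uc → Uc ≤ Tc → Dc Tc Uc = A * ((Uc : ℝ) ^ (-q) * Kc Tc Uc ^ p) :=
    fun Tc Uc h1 h2 => by
      show (c₁ / Uc) ^ q * (ε * Kc Tc Uc / (lamf * Cf)) ^ p = _
      rw [mul_div_right_comm]
      exact div_rpow_mul_mul_rpow_eq hc₁.le (by positivity) (by positivity)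
        ((rpow_nonneg (by positivity) δf).trans (hKc Tc Uc h1 h2).1)
  have hSU : ∀ Tc : ℕ, 1 ≤ Tc → Dc Tc 1 = A * Kc Tc 1 ^ p := fun Tc hTc => by
    rw [hD Tc 1 le_rfl hTc, Nat.cast_one, one_rpow, one_mul]
  have hMU : ∀ Tc : ℕ, 1 ≤ Tc → Dc Tc Tc = A * (Tc : ℝ) ^ (-q) := fun Tc hTc => by
    rw [hD Tc Tc hTc le_rfl, hKcMU Tc hTc, one_rpow, mul_one]
  have hK : IsThetaGeOne (fun Tc => Kc Tc 1) (fun Tc => (Tc : ℝ) ^ δf) :=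
    ⟨1, Gamma (1 - δf), one_pos, hΓ, fun Tc hTc => by
      simpa [Nat.sub_add_cancel hTc] using hKc Tc 1 le_rfl hTc⟩
  have hKp : IsThetaGeOne (fun Tc => Kc Tc 1 ^ p) (fun Tc => (Tc : ℝ) ^ q) :=
    (hK.rpow (fun _ => by positivity) (by positivity)).congr (fun _ _ => rfl) fun Tc _ => by
      rw [← rpow_mul (Nat.cast_nonneg Tc), show δf * p = q by simp only [p, q]; field_simp]
  refine ⟨(hKp.const_mul hA).congr (fun Tc hTc => (hSU Tc hTc).symm) fun _ _ => rfl,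
    ((IsThetaGeOne.refl _).const_mul hA).congr (fun Tc hTc => (hMU Tc hTc).symm) fun _ _ => rfl,
    (hKp.mul_right (h := fun Tc => (Tc : ℝ) ^ q) fun _ => by positivity).congr
      (fun Tc hTc => ?_) fun Tc hTc => ?_⟩
  · rw [hSU Tc hTc, hMU Tc hTc]
    exact (mul_div_mul_rpow_neg hA.ne' (Nat.cast_pos.mpr hTc)).symm
  · rw [← rpow_add (Nat.cast_pos.mpr hTc), show q + q = 2 / αc by ring]
end
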